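/- Let x_i, v_i : [0, t*] → ℝ^d be continuous with ẋ_i(t) = v_i(t) for all i ∈ N, and suppose there are constants T̃ > 0 and c̃ ∈ (0,1) such that the velocity diameter satisfies Δ_N(t) ≤ (1 − c̃)^h · Δ_N(0) whenever h ∈ ℕ and h·T̃ ≤ t < (h+1)·T̃, for all t ∈ [0, t*]. If Δ_N(0) > 0, then for all i, j ∈ N: ‖(x_j(t*) − x_i(t*)) − (x_j(0) − x_i(0))‖ < (T̃/c̃)·Δ_N(0). -/
import Mathlib


/-- Velocity diameter of the set `S` of agents. -/
noncomputable def sdiam {n d : ℕ} (S : Set (Fin n))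
    (v : Fin n → EuclideanSpace ℝ (Fin d)) : ℝ :=
  sSup {x | ∃ i ∈ S, ∃ j ∈ S, x = ‖v i - v j‖}

lemma norm_sub_le_sdiam {n d : ℕ} (w : Fin n → EuclideanSpace ℝ (Fin d)) (i j : Fin n) :
    ‖w j - w i‖ ≤ sdiam Set.univ w := by
  have himg : {x | ∃ a ∈ (Set.univ : Set (Fin n)), ∃ b ∈ Set.univ, x = ‖w a - w b‖}
      = (fun p : Fin n × Fin n => ‖w p.1 - w p.2‖) '' Set.univ := by
    ext y
    constructor
    · rintro ⟨a, -, b, -, rfl⟩; exact ⟨(a, b), trivial, rfl⟩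
    · rintro ⟨⟨a, b⟩, -, rfl⟩; exact ⟨a, trivial, b, trivial, rfl⟩
  have hbdd : BddAbove {x | ∃ a ∈ (Set.univ : Set (Fin n)), ∃ b ∈ Set.univ, x = ‖w a - w b‖} := by
    rw [himg]
    exact (Set.finite_univ.image _).bddAbove
  exact le_csSup hbdd ⟨j, trivial, i, trivial, rfl⟩

/-- Displacement estimate used in the proof of Theorem 3: if `ẋᵢ = vᵢ` on `[0, t*]` and
the velocity diameter satisfies the geometric decay
`Δ_N(t) ≤ (1 - c̃)ʰ Δ_N(0)` whenever `h T̃ ≤ t < (h+1) T̃`, then relative positions move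
by strictly less than `(T̃ / c̃) Δ_N(0)`. -/
theorem stmt14 {n d : ℕ} (x v : ℝ → Fin n → EuclideanSpace ℝ (Fin d))
    (tstar : ℝ) (htstar : 0 ≤ tstar)
    (hxc : ∀ i : Fin n, ContinuousOn (fun t => x t i) (Set.Icc 0 tstar))
    (hvc : ∀ i : Fin n, ContinuousOn (fun t => v t i) (Set.Icc 0 tstar))
    (hderiv : ∀ i : Fin n, ∀ t ∈ Set.Icc 0 tstar,
      HasDerivAt (fun s => x s i) (v t i) t)
    (Tt ct : ℝ) (hT : 0 < Tt) (hc0 : 0 < ct) (hc1 : ct < 1)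
    (hdecay : ∀ t ∈ Set.Icc 0 tstar, ∀ h : ℕ,
      (h : ℝ) * Tt ≤ t → t < ((h : ℝ) + 1) * Tt →
      sdiam Set.univ (v t) ≤ (1 - ct) ^ h * sdiam Set.univ (v 0))
    (hpos : 0 < sdiam Set.univ (v 0)) :
    ∀ i j : Fin n,
      ‖(x tstar j - x tstar i) - (x 0 j - x 0 i)‖ < (Tt / ct) * sdiam Set.univ (v 0) := by
  intro i j
  set Δ0 := sdiam Set.univ (v 0) with hΔ0
  have h1c : 0 < 1 - ct := by linarith
  -- improved decay: only lower bound on t needed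
  have hdecay' : ∀ t ∈ Set.Icc 0 tstar, ∀ h : ℕ, (h : ℝ) * Tt ≤ t →
      sdiam Set.univ (v t) ≤ (1 - ct) ^ h * Δ0 := by
    intro t ht h hht
    have ht0 : 0 ≤ t := ht.1
    set m := ⌊t / Tt⌋₊ with hm
    have hmle : (m : ℝ) * Tt ≤ t := by
      have := Nat.floor_le (a := t / Tt) (div_nonneg ht0 hT.le)
      calc (m : ℝ) * Tt ≤ (t / Tt) * Tt := by nlinarith
        _ = t := div_mul_cancel₀ t hT.ne'
    have hmlt : t < ((m : ℝ) + 1) * Tt := by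
      have := Nat.lt_floor_add_one (t / Tt)
      calc t = (t / Tt) * Tt := (div_mul_cancel₀ t hT.ne').symm
        _ < ((m : ℝ) + 1) * Tt := by nlinarith
    have hhm : h ≤ m := by
      by_contra hcon
      push_neg at hcon
      have : (m : ℝ) + 1 ≤ (h : ℝ) := by exact_mod_cast hcon
      nlinarith
    calc sdiam Set.univ (v t) ≤ (1 - ct) ^ m * Δ0 := hdecay t ht m hmle hmlt
      _ ≤ (1 - ct) ^ h * Δ0 := by
          apply mul_le_mul_of_nonneg_right _ hpos.le
          exact pow_le_pow_of_le_one h1c.le (by linarith) hhm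
  -- the difference function
  set f : ℝ → EuclideanSpace ℝ (Fin d) := fun t => x t j - x t i with hf
  have hfd : ∀ t ∈ Set.Icc 0 tstar, HasDerivAt f (v t j - v t i) t := fun t ht =>
    (hderiv j t ht).sub (hderiv i t ht)
  -- partition points
  set u : ℕ → ℝ := fun h => min ((h : ℝ) * Tt) tstar with hu
  have hu0 : u 0 = 0 := by simp [hu, htstar]
  have humem : ∀ h, u h ∈ Set.Icc 0 tstar := fun h =>
    ⟨le_min (by positivity) htstar, min_le_right _ _⟩
  -- segment estimate
  have hseg : ∀ h : ℕ, ‖f (u (h + 1)) - f (u h)‖ ≤ (1 - ct) ^ h * Δ0 * Tt := by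
    intro h
    rcases le_or_gt ((h : ℝ) * Tt) tstar with hle | hlt
    · have huh : u h = (h : ℝ) * Tt := min_eq_left hle
      set s := Set.Icc (u h) (u (h + 1)) with hs
      have hsub : s ⊆ Set.Icc 0 tstar := by
        intro t ht
        exact ⟨(humem h).1.trans ht.1, ht.2.trans (humem (h + 1)).2⟩
      have hbound : ∀ t ∈ s, ‖v t j - v t i‖ ≤ (1 - ct) ^ h * Δ0 := by
        intro t ht
        calc ‖v t j - v t i‖ ≤ sdiam Set.univ (v t) := norm_sub_le_sdiam (v t) i j
          _ ≤ (1 - ct) ^ h * Δ0 := by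
              apply hdecay' t (hsub ht) h
              rw [← huh]; exact ht.1
      have hmvt := Convex.norm_image_sub_le_of_norm_hasDerivWithin_le
        (f := f) (f' := fun t => v t j - v t i) (s := s)
        (fun t ht => (hfd t (hsub ht)).hasDerivWithinAt) hbound (convex_Icc _ _)
        (Set.left_mem_Icc.2 (by
          apply min_le_min _ le_rfl
          push_cast
          nlinarith))
        (Set.right_mem_Icc.2 (by
          apply min_le_min _ le_rfl
          push_cast
          nlinarith))
      have hlen : ‖u (h + 1) - u h‖ ≤ Tt := by
        have h1 : u h ≤ u (h + 1) := by
          apply min_le_min _ le_rfl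
          push_cast
          nlinarith
        have h2 : u (h + 1) ≤ ((h : ℝ) + 1) * Tt := by
          simpa [hu] using min_le_left (((h : ℝ) + 1) * Tt) tstar
        rw [Real.norm_eq_abs, abs_of_nonneg (by linarith)]
        rw [huh] at h1 ⊢
        push_cast at h2 ⊢
        linarith
      calc ‖f (u (h + 1)) - f (u h)‖ ≤ (1 - ct) ^ h * Δ0 * ‖u (h + 1) - u h‖ := hmvt
        _ ≤ (1 - ct) ^ h * Δ0 * Tt := by
            apply mul_le_mul_of_nonneg_left hlen
            positivity
    · have h1 : u h = tstar := min_eq_right hlt.le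
      have h2 : u (h + 1) = tstar := by
        apply min_eq_right
        push_cast
        nlinarith
      rw [h1, h2, sub_self, norm_zero]
      positivity
  -- number of segments
  set H := ⌈tstar / Tt⌉₊ with hH
  have huH : u H = tstar := by
    apply min_eq_right
    have := Nat.le_ceil (tstar / Tt)
    calc tstar = (tstar / Tt) * Tt := (div_mul_cancel₀ tstar hT.ne').symm
      _ ≤ (H : ℝ) * Tt := by nlinarith
  have htel : f tstar - f 0 = ∑ h ∈ Finset.range H, (f (u (h + 1)) - f (u h)) := by
    rw [Finset.sum_range_sub (fun h => f (u h)), hu0, huH]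
  have hsum : ‖f tstar - f 0‖ ≤ (∑ h ∈ Finset.range H, (1 - ct) ^ h) * (Δ0 * Tt) := by
    rw [htel, Finset.sum_mul]
    refine (norm_sum_le _ _).trans (Finset.sum_le_sum fun h _ => ?_)
    calc ‖f (u (h + 1)) - f (u h)‖ ≤ (1 - ct) ^ h * Δ0 * Tt := hseg h
      _ = (1 - ct) ^ h * (Δ0 * Tt) := by ring
  have hgeom : (∑ h ∈ Finset.range H, (1 - ct) ^ h) < 1 / ct := by
    rw [geom_sum_eq (by linarith : (1 : ℝ) - ct ≠ 1)]
    have hp : 0 < (1 - ct) ^ H := pow_pos h1c H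
    have e : ((1 - ct) ^ H - 1) / (1 - ct - 1) = (1 - (1 - ct) ^ H) / ct := by
      rw [div_eq_div_iff (by linarith : (1:ℝ) - ct - 1 ≠ 0) hc0.ne']
      ring
    rw [e, div_lt_div_iff₀ hc0 hc0]
    nlinarith
  calc ‖f tstar - f 0‖ ≤ (∑ h ∈ Finset.range H, (1 - ct) ^ h) * (Δ0 * Tt) := hsum
    _ < (1 / ct) * (Δ0 * Tt) := by
        apply mul_lt_mul_of_pos_right hgeom
        positivity
    _ = (Tt / ct) * Δ0 := by ring
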